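/- arXiv:1708.03654 — 3 statements merged into one kernel-verified Lean document; each statement's English description precedes it below -/
import Mathlib

section
/- For m,q,k ≥ 1, d | m, q ≥ 2, and any fixed k-mer y, the number of linearized cyclic multi de Bruijn sequences with parameters (m,q,k) of rotational order d that begin with y equals the number with parameters (m/d,q,k) of order 1 that begin with y. -/
/-- Cyclic window of length k of a word of length n, starting at position i. -/
def cycWin (n k q : ℕ) (s : Fin n → Fin q) (i : Fin n) : Fin k → Fin q :=
  fun j => s ⟨((i : ℕ) + (j : ℕ)) % n, Nat.mod_lt _ i.pos⟩

/-- A linearized cyclic multi de Bruijn sequence: every k-mer occurs exactly m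
times among the cyclic windows of length k. -/
def isCycMDB (m q k : ℕ) (s : Fin (m * q ^ k) → Fin q) : Prop :=
  ∀ y : Fin k → Fin q,
    (Finset.univ.filter (fun i : Fin (m * q ^ k) => cycWin (m * q ^ k) k q s i = y)).card = m

/-- Cyclic shift of a word of length n by r positions. -/
def cshift (n r q : ℕ) (s : Fin n → Fin q) : Fin n → Fin q :=
  fun i => s ⟨((i : ℕ) + r) % n, Nat.mod_lt _ i.pos⟩

/-- `s` (of length n) has rotational order e: e is the largest divisor d of n
such that shifting s by n/d positions leaves s fixed. -/
def hasOrder (n q : ℕ) (s : Fin n → Fin q) (e : ℕ) : Prop :=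
  IsGreatest {d : ℕ | d ∣ n ∧ cshift n (n / d) q s = s} e

/-- `s` begins with the k-mer y. -/
def startsWith (n k q : ℕ) (s : Fin n → Fin q) (y : Fin k → Fin q) : Prop :=
  ∀ (j : Fin k) (h : (j : ℕ) < n), s ⟨(j : ℕ), h⟩ = y j

/-!
A word of length `d * n'` fixed by the shift by `n'` is the `d`-fold repetition of its prefix of
length `n'`, so taking that prefix and repeating periodically are inverse bijections. Repetition
multiplies every window count by `d` and keeps the least period of the word under the cyclic
shift; as the order of a word is its length divided by that least period, the order is
multiplied by `d` as well. Since `k ≤ (m / d) * q ^ k`, the first `k` letters do not change.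
-/

open Finset

variable {q : ℕ}

section Shift

variable {n : ℕ}

lemma cshift_add (a b : ℕ) (s : Fin n → Fin q) :
    cshift n b q (cshift n a q s) = cshift n (a + b) q s := by
  funext i
  simp only [cshift, Nat.mod_add_mod, Nat.add_assoc, Nat.add_comm b a]

lemma cshift_zero (s : Fin n → Fin q) : cshift n 0 q s = s := by
  funext i
  simp only [cshift, Nat.add_zero, Nat.mod_eq_of_lt i.2]

lemma cshift_self (s : Fin n → Fin q) : cshift n n q s = s := by
  funext i
  simp only [cshift, Nat.add_mod_right, Nat.mod_eq_of_lt i.2]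

lemma cshift_eq_iterate (r : ℕ) : cshift n r q = (cshift n 1 q)^[r] := by
  induction r with
  | zero => funext s; exact cshift_zero s
  | succ r ih => funext s; rw [Function.iterate_succ_apply', ← ih, cshift_add]

lemma cshift_eq_self_iff_isPeriodicPt (r : ℕ) (s : Fin n → Fin q) :
    cshift n r q s = s ↔ Function.IsPeriodicPt (cshift n 1 q) r s := by
  rw [cshift_eq_iterate]; rfl

lemma hasOrder_iff_mul_minimalPeriod_eq (hn : 0 < n) (s : Fin n → Fin q) (e : ℕ) :
    hasOrder n q s e ↔ e * Function.minimalPeriod (cshift n 1 q) s = n := by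
  set p := Function.minimalPeriod (cshift n 1 q) s
  have hp : p ∣ n := ((cshift_eq_self_iff_isPeriodicPt n s).1 (cshift_self s)).minimalPeriod_dvd
  have hp0 : 0 < p := Nat.pos_of_dvd_of_pos hp hn
  have hset : {d : ℕ | d ∣ n ∧ cshift n (n / d) q s = s} = {d | d * p ∣ n} := by
    ext d
    simp only [Set.mem_ofPred_eq, cshift_eq_self_iff_isPeriodicPt,
      Function.isPeriodicPt_iff_minimalPeriod_dvd]
    constructor
    · rintro ⟨hd, hpd⟩
      exact (Nat.dvd_div_iff_mul_dvd hd).1 hpd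
    · intro h
      exact ⟨dvd_of_mul_right_dvd h, (Nat.dvd_div_iff_mul_dvd (dvd_of_mul_right_dvd h)).2 h⟩
  have hgreatest : IsGreatest {d : ℕ | d * p ∣ n} (n / p) :=
    ⟨by simp [Nat.div_mul_cancel hp], fun d hd => (Nat.le_div_iff_mul_le hp0).2
      (Nat.le_of_dvd hn hd)⟩
  rw [hasOrder, hset]
  exact ⟨fun h => by rw [h.unique hgreatest, Nat.div_mul_cancel hp],
    fun h => by rwa [← Nat.eq_div_of_mul_eq_left hp0.ne' h] at hgreatest⟩

end Shift

lemma card_filter_modNat {m n : ℕ} (P : Fin n → Prop) [DecidablePred P] :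
    #{i : Fin (m * n) | P i.modNat} = m * #{j | P j} := by
  conv_rhs => rw [← card_fin m, ← card_product]
  refine card_equiv finProdFinEquiv.symm ?_
  simp [finProdFinEquiv_symm_apply]

def periodicExtend (n : ℕ) {n' : ℕ} (hn' : 0 < n') (t : Fin n' → Fin q) : Fin n → Fin q :=
  fun i => t ⟨i % n', Nat.mod_lt _ hn'⟩

section PeriodicExtend

variable {n n' : ℕ} (hn' : 0 < n')

lemma take_periodicExtend (hle : n' ≤ n) (t : Fin n' → Fin q) :
    Fin.take n' hle (periodicExtend n hn' t) = t := by
  funext j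
  simp only [Fin.take_apply, periodicExtend, Fin.val_castLE, Nat.mod_eq_of_lt j.2]

lemma periodicExtend_take (hle : n' ≤ n) {s : Fin n → Fin q} (hs : cshift n n' q s = s) :
    periodicExtend n hn' (Fin.take n' hle s) = s := by
  funext i
  have hper : cshift n (n' * (i / n')) q s = s := by
    rw [cshift_eq_self_iff_isPeriodicPt] at hs ⊢
    exact hs.mul_const _
  conv_lhs => rw [← hper]
  simp only [periodicExtend, Fin.take_apply, cshift, Fin.castLE_mk, Nat.mod_add_div,
    Nat.mod_eq_of_lt i.2]

lemma cshift_periodicExtend (hdvd : n' ∣ n) (r : ℕ) (t : Fin n' → Fin q) :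
    cshift n r q (periodicExtend n hn' t) = periodicExtend n hn' (cshift n' r q t) := by
  funext i
  simp only [cshift, periodicExtend, Nat.mod_mod_of_dvd _ hdvd, Nat.mod_add_mod]

lemma minimalPeriod_periodicExtend (hle : n' ≤ n) (hdvd : n' ∣ n) (t : Fin n' → Fin q) :
    Function.minimalPeriod (cshift n 1 q) (periodicExtend n hn' t)
      = Function.minimalPeriod (cshift n' 1 q) t := by
  have hinj : Function.Injective (periodicExtend n hn' (n' := n') (q := q)) :=
    Function.LeftInverse.injective (take_periodicExtend hn' hle)
  refine Function.minimalPeriod_eq_minimalPeriod_iff.2 fun r => ?_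
  rw [← cshift_eq_self_iff_isPeriodicPt, ← cshift_eq_self_iff_isPeriodicPt,
    cshift_periodicExtend hn' hdvd, hinj.eq_iff]

lemma hasOrder_periodicExtend_iff {d : ℕ} (hd : 0 < d) (hn : n = d * n') (t : Fin n' → Fin q)
    (e : ℕ) : hasOrder n q (periodicExtend n hn' t) (d * e) ↔ hasOrder n' q t e := by
  have hle : n' ≤ n := hn ▸ Nat.le_mul_of_pos_left n' hd
  have hdvd : n' ∣ n := hn ▸ Nat.dvd_mul_left n' d
  rw [hasOrder_iff_mul_minimalPeriod_eq (hn'.trans_le hle), hasOrder_iff_mul_minimalPeriod_eq hn',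
    minimalPeriod_periodicExtend hn' hle hdvd, hn, mul_assoc, Nat.mul_left_cancel_iff hd]

lemma cycWin_periodicExtend (hdvd : n' ∣ n) (k : ℕ) (t : Fin n' → Fin q) (i : Fin n) :
    cycWin n k q (periodicExtend n hn' t) i = cycWin n' k q t ⟨i % n', Nat.mod_lt _ hn'⟩ := by
  funext j
  simp only [cycWin, periodicExtend, Nat.mod_mod_of_dvd _ hdvd, Nat.mod_add_mod]

lemma card_cycWin_periodicExtend {d : ℕ} (hn : n = d * n') (k : ℕ) (t : Fin n' → Fin q)
    (y : Fin k → Fin q) :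
    #{i : Fin n | cycWin n k q (periodicExtend n hn' t) i = y}
      = d * #{j : Fin n' | cycWin n' k q t j = y} := by
  subst hn
  simp only [cycWin_periodicExtend hn' (Nat.dvd_mul_left n' d)]
  exact card_filter_modNat (fun j => cycWin n' k q t j = y)

lemma startsWith_periodicExtend_iff {k : ℕ} (hk : k ≤ n') (hle : n' ≤ n)
    (t : Fin n' → Fin q) (y : Fin k → Fin q) :
    startsWith n k q (periodicExtend n hn' t) y ↔ startsWith n' k q t y := by
  have hmod (j : Fin k) : (j : ℕ) % n' = j := Nat.mod_eq_of_lt (j.2.trans_le hk)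
  simp only [startsWith, periodicExtend, hmod]
  exact ⟨fun h j _ => h j (j.2.trans_le (hk.trans hle)), fun h j _ => h j (j.2.trans_le hk)⟩

end PeriodicExtend

lemma isCycMDB_periodicExtend_iff {m m' d k : ℕ} (hd : 0 < d) (hm : m = d * m')
    (h : 0 < m' * q ^ k) (t : Fin (m' * q ^ k) → Fin q) :
    isCycMDB m q k (periodicExtend (m * q ^ k) h t) ↔ isCycMDB m' q k t := by
  have hn : m * q ^ k = d * (m' * q ^ k) := by rw [hm, mul_assoc]
  refine forall_congr' fun y => ?_
  rw [card_cycWin_periodicExtend h hn, hm, Nat.mul_left_cancel_iff hd]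

theorem card_order_d_eq_card_order_one_general (m q k d : ℕ) (hm : 1 ≤ m) (hq : 2 ≤ q)
    (hd : d ∣ m) (y : Fin k → Fin q) :
    Nat.card {s : Fin (m * q ^ k) → Fin q //
        isCycMDB m q k s ∧ hasOrder (m * q ^ k) q s d ∧ startsWith (m * q ^ k) k q s y}
    = Nat.card {t : Fin ((m / d) * q ^ k) → Fin q //
        isCycMDB (m / d) q k t ∧ hasOrder ((m / d) * q ^ k) q t 1 ∧
          startsWith ((m / d) * q ^ k) k q t y} := by
  have hd0 : 0 < d := Nat.pos_of_dvd_of_pos hd hm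
  have hm' : m = d * (m / d) := (Nat.mul_div_cancel' hd).symm
  have hmd : 0 < m / d := Nat.div_pos (Nat.le_of_dvd hm hd) hd0
  set n' := m / d * q ^ k
  have hn : m * q ^ k = d * n' := by rw [hm', mul_assoc]
  have hn' : 0 < n' := Nat.mul_pos hmd (by positivity)
  have hle : n' ≤ m * q ^ k := hn ▸ Nat.le_mul_of_pos_left n' hd0
  have hk : k ≤ n' := calc
    k ≤ 2 ^ k := Nat.lt_two_pow_self.le
    _ ≤ q ^ k := Nat.pow_le_pow_left hq k
    _ ≤ n' := Nat.le_mul_of_pos_left _ hmd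
  have hext (t : Fin n' → Fin q) :
      (isCycMDB m q k (periodicExtend (m * q ^ k) hn' t) ∧
        hasOrder (m * q ^ k) q (periodicExtend (m * q ^ k) hn' t) d ∧
        startsWith (m * q ^ k) k q (periodicExtend (m * q ^ k) hn' t) y) ↔
      (isCycMDB (m / d) q k t ∧ hasOrder n' q t 1 ∧ startsWith n' k q t y) := by
    rw [isCycMDB_periodicExtend_iff hd0 hm' hn', ← hasOrder_periodicExtend_iff hn' hd0 hn,
      mul_one, startsWith_periodicExtend_iff hn' hk hle]
  have hperiodic {s : Fin (m * q ^ k) → Fin q} (hs : hasOrder (m * q ^ k) q s d) :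
      periodicExtend (m * q ^ k) hn' (Fin.take n' hle s) = s := by
    refine periodicExtend_take hn' hle ?_
    rw [← Nat.div_eq_of_eq_mul_right hd0 hn]
    exact hs.1.2
  exact Nat.card_congr
    { toFun := fun s => ⟨Fin.take n' hle s.1,
        (hext (Fin.take n' hle s.1)).1 ((hperiodic s.2.2.1).symm ▸ s.2)⟩
      invFun := fun t => ⟨periodicExtend (m * q ^ k) hn' t.1, (hext t.1).2 t.2⟩
      left_inv := fun s => Subtype.ext (hperiodic s.2.2.1)
      right_inv := fun t => Subtype.ext (take_periodicExtend hn' hle t.1) }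

/-- For m,q,k ≥ 1, d | m, q ≥ 2, and any fixed k-mer y, the number of
linearized cyclic multi de Bruijn sequences with parameters (m,q,k) of rotational
order d beginning with y equals the number with parameters (m/d,q,k) of order 1
beginning with y. -/
theorem card_order_d_eq_card_order_one (m q k d : ℕ) (hm : 1 ≤ m) (hq : 2 ≤ q)
    (hk : 1 ≤ k) (hd : d ∣ m) (y : Fin k → Fin q) :
    Nat.card {s : Fin (m * q ^ k) → Fin q //
        isCycMDB m q k s ∧ hasOrder (m * q ^ k) q s d ∧ startsWith (m * q ^ k) k q s y}
    = Nat.card {t : Fin ((m / d) * q ^ k) → Fin q //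
        isCycMDB (m / d) q k t ∧ hasOrder ((m / d) * q ^ k) q t 1 ∧
          startsWith ((m / d) * q ^ k) k q t y} :=
  card_order_d_eq_card_order_one_general m q k d hm hq hd y
end

section
/- The number of cycle partitions of a finite balanced directed multigraph H equals the product over all vertices x of (Outdeg(x))!. -/
/-- `P` is a cycle partition of the directed multigraph with edge set `E`
(edge endpoints given by `Tail`, `Head`): a set of directed cycles
(cycles taken up to rotation, i.e. elements of `Cycle E`) using each edge of
the graph exactly once. -/
def IsCyclePartition {V E : Type*} (Tail Head : E → V) (P : Set (Cycle E)) : Prop :=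
  (∀ c ∈ P, c ≠ Cycle.nil ∧ c.Nodup ∧
    Cycle.Chain (fun e e' => Head e = Tail e') c) ∧
  ∀ e : E, ∃! c : Cycle E, c ∈ P ∧ e ∈ c

/-!
A cycle partition is the same thing as a permutation `σ` of the edges with
`Tail (σ e) = Head e`: `σ` sends each edge to the next edge of its cycle, and conversely the
cycles are the periodic orbits of `σ`. Such a permutation is a family of bijections from the
in-edges onto the out-edges of every vertex `x`, and by balance there are `(outdeg x)!` of
these at `x`.
-/

open Function

namespace List

variable {α : Type*} [DecidableEq α] {f : α → α} {l : List α}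

theorem iterate_getElem_zero_of_forall_eq_next (hl : l.Nodup)
    (hf : ∀ y (hy : y ∈ l), f y = l.next y hy) (hne : 0 < l.length) (i : ℕ) :
    f^[i] l[0] = l[i % l.length]'(Nat.mod_lt _ hne) := by
  induction i with
  | zero => simp
  | succ i ih =>
    rw [iterate_succ_apply', ih, hf _ (getElem_mem _), next_getElem _ hl]
    simp only [Nat.mod_add_mod]

theorem minimalPeriod_getElem_zero_of_forall_eq_next (hl : l.Nodup)
    (hf : ∀ y (hy : y ∈ l), f y = l.next y hy) (hne : 0 < l.length) :
    minimalPeriod f l[0] = l.length := by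
  have hiter := iterate_getElem_zero_of_forall_eq_next hl hf hne
  have hper : IsPeriodicPt f l.length l[0] := by
    show f^[l.length] l[0] = l[0]
    simpa only [Nat.mod_self] using hiter l.length
  refine le_antisymm (hper.minimalPeriod_le hne) (not_lt.1 fun hlt => ?_)
  have hret := hiter (minimalPeriod f l[0])
  rw [iterate_minimalPeriod] at hret
  have hzero : 0 = minimalPeriod f l[0] % l.length := hl.getElem_inj_iff.1 hret
  rw [Nat.mod_eq_of_lt hlt] at hzero
  exact (hper.minimalPeriod_pos hne).ne hzero

theorem coe_eq_periodicOrbit_of_forall_eq_next (hl : l.Nodup)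
    (hf : ∀ y (hy : y ∈ l), f y = l.next y hy) (hne : 0 < l.length) :
    (l : Cycle α) = periodicOrbit f l[0] := by
  rw [periodicOrbit_def, minimalPeriod_getElem_zero_of_forall_eq_next hl hf hne]
  congr 1
  refine ext_getElem (by simp) fun i hi _ => ?_
  simp [iterate_getElem_zero_of_forall_eq_next hl hf hne, Nat.mod_eq_of_lt hi]

end List

namespace Cycle

variable {α : Type*}

theorem exists_eq_coe_cons_of_mem {s : Cycle α} {x : α} (hx : x ∈ s) :
    ∃ t : List α, s = ↑(x :: t) := by
  induction s using Quotient.inductionOn' with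
  | h l =>
    obtain ⟨l₁, l₂, rfl⟩ := List.append_of_mem (mem_coe_iff.1 hx)
    exact ⟨l₂ ++ l₁, coe_eq_coe.2 (by simpa using List.isRotated_append (l := l₁) (l' := x :: l₂))⟩

theorem exists_mem_of_ne_nil {s : Cycle α} (hs : s ≠ nil) : ∃ x, x ∈ s := by
  induction s using Quotient.inductionOn' with
  | h l =>
    obtain ⟨x, hx⟩ := List.exists_mem_of_ne_nil l (mt (coe_eq_nil l).2 hs)
    exact ⟨x, mem_coe_iff.2 hx⟩

variable [DecidableEq α]

theorem next_congr {s s' : Cycle α} (h : s = s') (hs : s.Nodup) {x : α} (hx : x ∈ s) :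
    s.next hs x hx = s'.next (h ▸ hs) x (h ▸ hx) := by
  subst h
  rfl

theorem Chain.rel_next {r : α → α → Prop} {s : Cycle α} (hc : Chain r s) (hs : s.Nodup)
    {x : α} (hx : x ∈ s) : r x (s.next hs x hx) := by
  obtain ⟨t, rfl⟩ := exists_eq_coe_cons_of_mem hx
  rw [chain_coe_cons] at hc
  change r x ((x :: t).next x List.mem_cons_self)
  cases t with
  | nil => simpa using hc
  | cons y t => simpa using (List.isChain_cons_cons.1 hc).1

theorem eq_periodicOrbit_of_forall_eq_next {f : α → α} {s : Cycle α} (hs : s.Nodup)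
    (hf : ∀ y (hy : y ∈ s), f y = s.next hs y hy) {x : α} (hx : x ∈ s) :
    s = periodicOrbit f x := by
  obtain ⟨t, rfl⟩ := exists_eq_coe_cons_of_mem hx
  exact List.coe_eq_periodicOrbit_of_forall_eq_next (nodup_coe_iff.1 hs)
    (fun y hy => hf y (mem_coe_iff.2 hy)) (Nat.succ_pos _)

end Cycle

theorem Function.next_periodicOrbit {α : Type*} [DecidableEq α] {f : α → α} {x y : α}
    (hx : x ∈ periodicPts f) (hy : y ∈ periodicOrbit f x) :
    (periodicOrbit f x).next nodup_periodicOrbit y hy = f y := by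
  have hchain : Cycle.Chain (fun a b => f a = b) (periodicOrbit f x) :=
    (periodicOrbit_chain' _ hx).2 fun n => (iterate_succ_apply' f n x).symm
  exact (hchain.rel_next nodup_periodicOrbit hy).symm

theorem Nat.card_equiv_of_card_eq {α β : Type*} [Finite α] [Finite β]
    (h : Nat.card α = Nat.card β) : Nat.card (α ≃ β) = (Nat.card β).factorial := by
  obtain ⟨e⟩ := Finite.card_eq.1 h
  rw [← Nat.card_perm]
  exact Nat.card_congr (e.equivCongr (Equiv.refl β))

namespace IsCyclePartition

variable {V E : Type*} {Tail Head : E → V} {P : Set (Cycle E)} (hP : IsCyclePartition Tail Head P)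

protected theorem nodup_of_mem (hP : IsCyclePartition Tail Head P) {c : Cycle E} (hc : c ∈ P) :
    c.Nodup :=
  (hP.1 c hc).2.1

noncomputable def cycleOf (e : E) : Cycle E := (hP.2 e).exists.choose

theorem cycleOf_mem (e : E) : hP.cycleOf e ∈ P := (hP.2 e).exists.choose_spec.1

theorem mem_cycleOf (e : E) : e ∈ hP.cycleOf e := (hP.2 e).exists.choose_spec.2

theorem cycleOf_eq {c : Cycle E} (hc : c ∈ P) {e : E} (he : e ∈ c) : hP.cycleOf e = c :=
  (hP.2 e).unique ⟨hP.cycleOf_mem e, hP.mem_cycleOf e⟩ ⟨hc, he⟩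

variable [DecidableEq E]

noncomputable def succ (e : E) : E :=
  (hP.cycleOf e).next (hP.nodup_of_mem (hP.cycleOf_mem e)) e (hP.mem_cycleOf e)

theorem succ_eq_next {c : Cycle E} (hc : c ∈ P) {e : E} (he : e ∈ c) :
    hP.succ e = c.next (hP.nodup_of_mem hc) e he :=
  Cycle.next_congr (hP.cycleOf_eq hc he) _ _

theorem cycleOf_succ (e : E) : hP.cycleOf (hP.succ e) = hP.cycleOf e :=
  hP.cycleOf_eq (hP.cycleOf_mem e) (Cycle.next_mem ..)

theorem tail_succ (e : E) : Tail (hP.succ e) = Head e :=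
  ((hP.1 _ (hP.cycleOf_mem e)).2.2.rel_next _ _).symm

theorem succ_injective : Injective hP.succ := by
  intro a b hab
  have hcycle : hP.cycleOf b = hP.cycleOf a := by
    rw [← hP.cycleOf_succ b, ← hab, hP.cycleOf_succ]
  obtain ⟨c, hc, hs, hac, hbc⟩ : ∃ c ∈ P, ∃ hs : c.Nodup, a ∈ c ∧ b ∈ c :=
    ⟨_, hP.cycleOf_mem a, hP.nodup_of_mem (hP.cycleOf_mem a), hP.mem_cycleOf a,
      hcycle ▸ hP.mem_cycleOf b⟩
  calc a = c.prev hs (c.next hs a hac) (Cycle.next_mem ..) := (Cycle.prev_next ..).symm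
    _ = c.prev hs (c.next hs b hbc) (Cycle.next_mem ..) := by
      simp_rw [← hP.succ_eq_next hc, hab]
    _ = b := Cycle.prev_next ..

theorem eq_periodicOrbit_succ {c : Cycle E} (hc : c ∈ P) {e : E} (he : e ∈ c) :
    c = periodicOrbit hP.succ e :=
  Cycle.eq_periodicOrbit_of_forall_eq_next _ (fun _ hy => hP.succ_eq_next hc hy) he

theorem range_periodicOrbit_succ : Set.range (periodicOrbit hP.succ) = P := by
  ext c
  constructor
  · rintro ⟨e, rfl⟩
    rw [← hP.eq_periodicOrbit_succ (hP.cycleOf_mem e) (hP.mem_cycleOf e)]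
    exact hP.cycleOf_mem e
  · intro hc
    obtain ⟨e, he⟩ := Cycle.exists_mem_of_ne_nil (hP.1 c hc).1
    exact ⟨e, (hP.eq_periodicOrbit_succ hc he).symm⟩

end IsCyclePartition

section SuccessorPerm

variable {V E : Type*} (Tail Head : E → V)

abbrev SuccessorPerm : Type _ := {σ : Equiv.Perm E // ∀ e, Tail (σ e) = Head e}

theorem isCyclePartition_range_periodicOrbit [Finite E] (σ : SuccessorPerm Tail Head) :
    IsCyclePartition Tail Head (Set.range (periodicOrbit σ.1)) := by
  have hper : ∀ e, e ∈ periodicPts σ.1 := σ.1.injective.mem_periodicPts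
  refine ⟨?_, fun e => ⟨periodicOrbit σ.1 e, ⟨⟨e, rfl⟩, self_mem_periodicOrbit (hper e)⟩, ?_⟩⟩
  · rintro c ⟨e, rfl⟩
    refine ⟨?_, nodup_periodicOrbit, ?_⟩
    · simpa [periodicOrbit_eq_nil_iff_not_periodic_pt] using hper e
    · rw [periodicOrbit_chain' _ (hper e)]
      intro n
      rw [iterate_succ_apply', σ.2]
  · rintro c ⟨⟨e', rfl⟩, he⟩
    obtain ⟨n, rfl⟩ := (mem_periodicOrbit_iff (hper e')).1 he
    exact (periodicOrbit_apply_iterate_eq (hper e') n).symm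

noncomputable def SuccessorPerm.equivCyclePartition [Finite E] [DecidableEq E] :
    SuccessorPerm Tail Head ≃ {P : Set (Cycle E) // IsCyclePartition Tail Head P} where
  toFun σ := ⟨_, isCyclePartition_range_periodicOrbit Tail Head σ⟩
  invFun P := ⟨Equiv.ofBijective _ (Finite.injective_iff_bijective.1 P.2.succ_injective),
    P.2.tail_succ⟩
  left_inv σ := by
    refine Subtype.ext (Equiv.ext fun e => ?_)
    have he : e ∈ periodicPts σ.1 := σ.1.injective.mem_periodicPts e
    exact ((isCyclePartition_range_periodicOrbit Tail Head σ).succ_eq_next ⟨e, rfl⟩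
      (self_mem_periodicOrbit he)).trans (next_periodicOrbit he _)
  right_inv P := Subtype.ext P.2.range_periodicOrbit_succ

def SuccessorPerm.equivPiFiber :
    SuccessorPerm Tail Head ≃ ∀ x : V, ({e : E // Head e = x} ≃ {e : E // Tail e = x}) where
  toFun σ x :=
    { toFun := fun e => ⟨σ.1 e, by rw [σ.2, e.2]⟩
      invFun := fun e => ⟨σ.1.symm e, by rw [← σ.2, Equiv.apply_symm_apply, e.2]⟩
      left_inv := fun e => Subtype.ext (σ.1.symm_apply_apply e)
      right_inv := fun e => Subtype.ext (σ.1.apply_symm_apply e) }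
  invFun F :=
    ⟨(Equiv.sigmaFiberEquiv Head).symm.trans
      ((Equiv.sigmaCongrRight F).trans (Equiv.sigmaFiberEquiv Tail)),
      fun e => (F (Head e) ⟨e, rfl⟩).2⟩
  left_inv _ := rfl
  right_inv F := by
    funext x
    ext ⟨e, rfl⟩
    rfl

end SuccessorPerm

/-- The number of cycle partitions of a finite balanced directed
multigraph equals the product over all vertices x of (Outdeg(x))!. -/
theorem card_cycle_partitions {V E : Type*} [Fintype V] [Fintype E]
    (Tail Head : E → V)
    (hbal : ∀ x : V, Nat.card {e : E // Head e = x} = Nat.card {e : E // Tail e = x}) :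
    Nat.card {P : Set (Cycle E) // IsCyclePartition Tail Head P}
      = ∏ x : V, (Nat.card {e : E // Tail e = x}).factorial := by
  classical
  rw [← Nat.card_congr (SuccessorPerm.equivCyclePartition Tail Head),
    Nat.card_congr (SuccessorPerm.equivPiFiber Tail Head), Nat.card_pi]
  exact Finset.prod_congr rfl fun x _ => Nat.card_equiv_of_card_eq (hbal x)
end

section
/- A word w of length n over a totally ordered alphabet is in the image of the Burrows–Wheeler transform (i.e., w = BWT(s) for some word s of length n) if and only if the inverse Extended Burrows–Wheeler Transform of w is a multiset consisting of d copies of a single aperiodic cycle (t) for some primitive word t with d·|t| = n; in that case BWT⁻¹(w) = t^d up to rotation. -/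
/-- A word is primitive (the cycle it represents is aperiodic) if it is nonempty
and all of its rotations are distinct. -/
def Primitive {α : Type*} (l : List α) : Prop :=
  l ≠ [] ∧ ∀ n : ℕ, 0 < n → n < l.length → l.rotate n ≠ l

/-- The Burrows–Wheeler transform of a word u: list all |u| cyclic rotations of
u, sort them lexicographically, and read the last column top to bottom. -/
def bwt {α : Type*} [LinearOrder α] [Inhabited α] (u : List α) : List α :=
  (((List.range u.length).map (fun i => u.rotate i)).mergeSort
      (fun a b => decide (a ≤ b))).map (fun l => l.getLastD default)

/-- The Extended Burrows–Wheeler Transform of a multicyclic sequence, represented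
as a multiset L of primitive words (one linearization per aperiodic cycle, with
multiplicity): let c be the lcm of the word lengths; for each word s of L (with
multiplicity) and each rotation ρ^j(s), form the row (ρ^j(s))^{c/|s|}; sort all
rows lexicographically and read the last column.  Since the EBWT is a bijection
from multicyclic sequences of total length n to words of length n, the inverse
EBWT of w equals σ iff EBWT(σ) = w. -/
noncomputable def ebwt {α : Type*} [LinearOrder α] [Inhabited α]
    (L : Multiset (List α)) : List α :=
  letI c := ((L.map List.length).toList).foldr Nat.lcm 1
  letI rows := (L.toList).flatMap (fun s =>
    (List.range s.length).map (fun j =>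
      (List.replicate (c / s.length) (s.rotate j)).flatten))
  (rows.mergeSort (fun a b => decide (a ≤ b))).map (fun l => l.getLastD default)
/-!
Every nonempty word is a power `t ^ d` of a primitive word `t`: the prefix whose length is the
least rotation period. The rotations of `t ^ d` are the `d`-th powers of the rotations of `t`,
each taken `d` times, and on words of equal length `u ↦ u ^ d` preserves the lexicographic order
and the last letter; hence `bwt (t ^ d) = ebwt {t, …, t}`.

Conversely, the last column of a sorted table of words of length `n` that is closed under rotation
determines the table: rotating every row right by one shows that the `(k+1)`-prefixes of the rows
are the letters of the last column prepended to the sorted `k`-prefixes. So two words of equal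
length with the same BWT have the same rotations, i.e. are rotations of each other.
-/

open Function

section WordPow

variable {β : Type*}

def wordPow (t : List β) (d : ℕ) : List β := (List.replicate d t).flatten

@[simp] lemma wordPow_zero (t : List β) : wordPow t 0 = [] := rfl

@[simp] lemma wordPow_succ (t : List β) (d : ℕ) : wordPow t (d + 1) = t ++ wordPow t d := by
  simp [wordPow, List.replicate_succ]

@[simp] lemma length_wordPow (t : List β) (d : ℕ) : (wordPow t d).length = d * t.length := by
  induction d with
  | zero => simp
  | succ d ih => simp [ih, Nat.succ_mul, Nat.add_comm]

lemma coe_wordPow (l : List β) (d : ℕ) : (wordPow l d : Multiset β) = d • (l : Multiset β) := by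
  induction d with
  | zero => simp
  | succ d ih => rw [wordPow_succ, ← Multiset.coe_add, ih, succ_nsmul']

lemma getLastD_wordPow (t : List β) {d : ℕ} (hd : d ≠ 0) (x : β) :
    (wordPow t d).getLastD x = t.getLastD x := by
  simp only [List.getLastD_eq_getLast?, wordPow, List.getLast?_flatten_replicate hd]

lemma wordPow_append_append (a b : List β) (e : ℕ) :
    wordPow (a ++ b) e ++ a = a ++ wordPow (b ++ a) e := by
  induction e with
  | zero => simp
  | succ e ih => simp [ih]

lemma rotate_wordPow {t : List β} {m : ℕ} (hm : m ≤ t.length) (e : ℕ) :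
    (wordPow t e).rotate m = wordPow (t.rotate m) e := by
  obtain ⟨a, b, rfl, rfl⟩ : ∃ a b, t = a ++ b ∧ m = a.length :=
    ⟨t.take m, t.drop m, (List.take_append_drop m t).symm, by simp [hm]⟩
  cases e with
  | zero => simp
  | succ e =>
    rw [wordPow_succ, List.append_assoc, List.rotate_append_length_eq, List.append_assoc,
      wordPow_append_append, List.rotate_append_length_eq, wordPow_succ, List.append_assoc]

lemma take_mul_eq_wordPow {s : List β} {p : ℕ} (hs : s.rotate p = s) :
    ∀ m, m * p ≤ s.length → s.take (m * p) = wordPow (s.take p) m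
  | 0, _ => by simp
  | m + 1, hm => by
    rw [Nat.succ_mul, Nat.add_comm] at hm ⊢
    have hdrop : s.drop p ++ s.take p = s := by
      rw [← List.rotate_eq_drop_append_take (by omega), hs]
    have htail : (s.drop p).take (m * p) = s.take (m * p) := by
      conv_rhs => rw [← hdrop]
      rw [List.take_append_of_le_length (by rw [List.length_drop]; omega)]
    rw [List.take_add, htail, take_mul_eq_wordPow hs m (by omega), wordPow_succ]

end WordPow

section PrimitiveRoot

variable {β : Type*}

lemma primitive_singleton (a : β) : Primitive [a] :=
  ⟨List.cons_ne_nil a [], fun _ hm hm1 => absurd hm1 (by simpa using hm.ne')⟩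

lemma rotate_one_iterate (s : List β) (k : ℕ) :
    (fun l : List β => l.rotate 1)^[k] s = s.rotate k := by
  induction k with
  | zero => simp
  | succ k ih => rw [iterate_succ_apply', ih, List.rotate_rotate]

lemma isPeriodicPt_rotate_one_iff {s : List β} {k : ℕ} :
    IsPeriodicPt (fun l : List β => l.rotate 1) k s ↔ s.rotate k = s := by
  rw [IsPeriodicPt, IsFixedPt, rotate_one_iterate]

theorem exists_primitive_wordPow_eq {s : List β} (hs : s ≠ []) :
    ∃ (t : List β) (d : ℕ), Primitive t ∧ wordPow t d = s := by
  set p := minimalPeriod (fun l : List β => l.rotate 1) s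
  have hn : 0 < s.length := List.length_pos_iff.mpr hs
  have hper_n := isPeriodicPt_rotate_one_iff.mpr (List.rotate_length s)
  have hp_pos : 0 < p := hper_n.minimalPeriod_pos hn
  have hp_dvd : p ∣ s.length := hper_n.minimalPeriod_dvd
  have hps : s.rotate p = s := isPeriodicPt_rotate_one_iff.mp (isPeriodicPt_minimalPeriod _ s)
  have hlen : (s.take p).length = p := List.length_take_of_le (Nat.le_of_dvd hn hp_dvd)
  have hpow : wordPow (s.take p) (s.length / p) = s := by
    rw [← take_mul_eq_wordPow hps _ (Nat.div_mul_le_self _ _), Nat.div_mul_cancel hp_dvd,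
      List.take_length]
  refine ⟨s.take p, s.length / p, ⟨List.ne_nil_of_length_pos (by rw [hlen]; exact hp_pos), ?_⟩,
    hpow⟩
  intro m hm_pos hm_lt hrot
  refine not_isPeriodicPt_of_pos_of_lt_minimalPeriod hm_pos.ne' (hlen ▸ hm_lt) ?_
  rw [isPeriodicPt_rotate_one_iff, ← hpow, rotate_wordPow hm_lt.le, hrot]

end PrimitiveRoot

namespace List

variable {α : Type*} [LinearOrder α]

lemma append_lt_append_of_lt_of_length_eq {a b : List α} (h : a < b)
    (hlen : a.length = b.length) (u v : List α) : a ++ u < b ++ v := by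
  replace h : Lex (· < ·) a b := h
  induction h with
  | nil => simp at hlen
  | cons _ ih => exact Lex.cons (ih (by simpa using hlen))
  | rel h => exact Lex.rel h

lemma monotone_take (k : ℕ) : Monotone (·.take k : List α → List α) := by
  intro a b h
  show a.take k ≤ b.take k
  rcases h.lt_or_eq with hlt | rfl
  · have hlex : Lex (· < ·) a b := hlt
    clear h hlt
    induction hlex generalizing k with
    | nil =>
      rw [take_nil]
      exact not_lt.mp not_lex_nil
    | cons _ ih =>
      cases k with
      | zero => simp
      | succ k => exact cons_le_cons _ (ih k)
    | rel h =>
      cases k with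
      | zero => simp
      | succ k => exact le_of_lt (Lex.rel h)
  · exact le_rfl

lemma take_succ_rotate_length_sub_one {β : Type*} {r : List β} {k : ℕ} (hk : k < r.length)
    (x : β) : (r.rotate (r.length - 1)).take (k + 1) = r.getLastD x :: r.take k := by
  obtain ⟨L, b, rfl⟩ := (eq_nil_or_concat r).resolve_left (ne_nil_of_length_pos (by omega))
  simp only [concat_eq_append, length_append, length_singleton] at hk ⊢
  rw [Nat.add_sub_cancel, rotate_append_length_eq, getLastD_concat, singleton_append,
    take_succ_cons, take_append_of_le_length (by omega : k ≤ L.length)]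

end List

lemma wordPow_le_wordPow_iff {α : Type*} [LinearOrder α] {a b : List α} {e : ℕ} (he : e ≠ 0)
    (hlen : a.length = b.length) : wordPow a e ≤ wordPow b e ↔ a ≤ b := by
  obtain ⟨e, rfl⟩ := Nat.exists_eq_succ_of_ne_zero he
  refine ⟨fun h => not_lt.mp fun hba => h.not_gt ?_, fun h => ?_⟩
  · exact List.append_lt_append_of_lt_of_length_eq hba hlen.symm _ _
  · rcases h.lt_or_eq with h | rfl
    · exact (List.append_lt_append_of_lt_of_length_eq h hlen _ _).le
    · exact le_rfl

namespace Multiset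

lemma toList_replicate {γ : Type*} (d : ℕ) (x : γ) :
    (replicate d x).toList = List.replicate d x :=
  List.eq_replicate_iff.mpr ⟨by simp, fun _ hy => eq_of_mem_replicate (mem_toList.mp hy)⟩

lemma sort_map_of_monotone {α β : Type*} [LinearOrder α] [LinearOrder β] {f : α → β}
    (hf : Monotone f) (s : Multiset α) : (s.map f).sort (· ≤ ·) = (s.sort (· ≤ ·)).map f := by
  conv_lhs => rw [← sort_eq s (· ≤ ·)]
  rw [map_coe, coe_sort, List.mergeSort_eq_self]
  exact (pairwise_sort s _).map f fun _ _ h => hf h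

end Multiset

namespace Function.Periodic

variable {γ : Type*} {g : ℕ → γ} {n : ℕ}

lemma map_range_add (hg : Periodic g n) (m : ℕ) :
    (Multiset.range n).map (fun i => g (m + i)) = (Multiset.range n).map g := by
  have h := congrArg (Multiset.map g) (congrArg Multiset.range (Nat.add_comm m n))
  have hg' : ∀ i, g (n + i) = g i := fun i => Nat.add_comm n i ▸ hg i
  simp only [Multiset.range_add, Multiset.map_add, Multiset.map_map, comp_def, hg'] at h
  rw [Multiset.add_comm] at h
  exact add_right_cancel h

lemma map_range_mul (hg : Periodic g n) (d : ℕ) :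
    (Multiset.range (d * n)).map g = d • (Multiset.range n).map g := by
  induction d with
  | zero => simp
  | succ d ih =>
    rw [Nat.succ_mul, Multiset.range_add, Multiset.map_add, Multiset.map_map, comp_def,
      hg.map_range_add, ih, succ_nsmul]

end Function.Periodic

lemma foldr_lcm_replicate_succ (d p : ℕ) : (List.replicate (d + 1) p).foldr Nat.lcm 1 = p := by
  induction d with
  | zero => simp
  | succ d ih => rw [List.replicate_succ, List.foldr_cons, ih, Nat.lcm_self]

section Rotations

variable {β : Type*}

def rotations (s : List β) : Multiset (List β) :=
  (Multiset.range s.length).map s.rotate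

lemma mem_rotations_iff {s r : List β} : r ∈ rotations s ↔ ∃ i < s.length, s.rotate i = r := by
  simp [rotations]

lemma length_of_mem_rotations {s r : List β} (h : r ∈ rotations s) : r.length = s.length := by
  obtain ⟨i, -, rfl⟩ := mem_rotations_iff.mp h
  exact List.length_rotate s i

lemma map_rotate_rotations (s : List β) (m : ℕ) :
    (rotations s).map (·.rotate m) = rotations s := by
  have hper : Periodic s.rotate s.length := fun i => by
    rw [← List.rotate_mod, Nat.add_mod_right, List.rotate_mod]
  simp only [rotations, Multiset.map_map, comp_def, List.rotate_rotate, Nat.add_comm _ m]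
  exact hper.map_range_add m

lemma rotations_wordPow (t : List β) (d : ℕ) :
    rotations (wordPow t d) = d • (rotations t).map (wordPow · d) := by
  have hper : Periodic (wordPow t d).rotate t.length := fun i => by
    rw [Nat.add_comm, ← List.rotate_rotate, rotate_wordPow le_rfl, List.rotate_length]
  rw [rotations, length_wordPow, hper.map_range_mul, rotations, Multiset.map_map]
  congr 1
  exact Multiset.map_congr rfl fun j hj => rotate_wordPow (Multiset.mem_range.mp hj).le d

end Rotations

section LastColumn

variable {α : Type*} [LinearOrder α] [Inhabited α]

def lastColumn (rows : Multiset (List α)) : List α :=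
  (rows.sort (· ≤ ·)).map (·.getLastD default)

lemma bwt_eq_lastColumn (u : List α) : bwt u = lastColumn (rotations u) := rfl

lemma ebwt_replicate (t : List α) (d : ℕ) :
    ebwt (Multiset.replicate d t) = lastColumn (d • rotations t) := by
  rcases d with _ | d
  · simp [ebwt, lastColumn]
  have hrow : ∀ j ∈ List.range t.length,
      (List.replicate (t.length / t.length) (t.rotate j)).flatten = t.rotate j := fun j hj => by
    rw [Nat.div_self (Nat.zero_lt_of_lt (List.mem_range.mp hj))]
    simp
  simp only [ebwt, Multiset.map_replicate, Multiset.toList_replicate, foldr_lcm_replicate_succ,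
    List.flatMap_replicate, List.map_congr_left hrow]
  rw [← wordPow, rotations, ← Multiset.coe_range, Multiset.map_coe, ← coe_wordPow]
  rfl

lemma lastColumn_map_wordPow {R : Multiset (List α)} {n e : ℕ} (he : e ≠ 0)
    (hR : ∀ r ∈ R, r.length = n) : lastColumn (R.map (wordPow · e)) = lastColumn R := by
  have hmono : ∀ a ∈ R, ∀ b ∈ R, a ≤ b ↔ wordPow a e ≤ wordPow b e := fun a ha b hb =>
    (wordPow_le_wordPow_iff he ((hR a ha).trans (hR b hb).symm)).symm
  rw [lastColumn, ← Multiset.map_sort _ _ _ _ hmono, List.map_map, lastColumn]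
  exact List.map_congr_left fun r _ => getLastD_wordPow r he default

lemma bwt_wordPow (t : List α) (d : ℕ) : bwt (wordPow t d) = ebwt (Multiset.replicate d t) := by
  rw [bwt_eq_lastColumn, rotations_wordPow, ebwt_replicate]
  rcases Nat.eq_zero_or_pos d with rfl | hd
  · simp
  rw [← Multiset.map_nsmul]
  exact lastColumn_map_wordPow hd.ne' fun r hr =>
    length_of_mem_rotations (Multiset.mem_of_mem_nsmul hr)

lemma map_take_succ_eq_zipWith {R : Multiset (List α)} {n k : ℕ} (hk : k < n)
    (hR : ∀ r ∈ R, r.length = n) (hrot : R.map (·.rotate (n - 1)) = R) :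
    R.map (·.take (k + 1)) =
      ↑(List.zipWith List.cons (lastColumn R) ((R.map (·.take k)).sort (· ≤ ·))) := by
  calc R.map (·.take (k + 1))
      = (R.map (·.rotate (n - 1))).map (·.take (k + 1)) := by rw [hrot]
    _ = R.map (fun r => r.getLastD default :: r.take k) := by
        rw [Multiset.map_map]
        refine Multiset.map_congr rfl fun r hr => ?_
        show (r.rotate (n - 1)).take (k + 1) = _
        rw [← hR r hr]
        exact List.take_succ_rotate_length_sub_one (by rw [hR r hr]; exact hk) default
    _ = ↑((R.sort (· ≤ ·)).map (fun r => r.getLastD default :: r.take k)) := by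
        rw [← Multiset.map_coe, Multiset.sort_eq]
    _ = _ := by
        rw [lastColumn, Multiset.sort_map_of_monotone (List.monotone_take k), List.zipWith_map,
          List.zipWith_self]

theorem eq_of_lastColumn_eq {R R' : Multiset (List α)} {n : ℕ}
    (hR : ∀ r ∈ R, r.length = n) (hR' : ∀ r ∈ R', r.length = n)
    (hrot : R.map (·.rotate (n - 1)) = R) (hrot' : R'.map (·.rotate (n - 1)) = R')
    (h : lastColumn R = lastColumn R') : R = R' := by
  have hprefix : ∀ k ≤ n, R.map (·.take k) = R'.map (·.take k) := by
    intro k hk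
    induction k with
    | zero =>
      have hcard : R.card = R'.card := by simpa [lastColumn] using congrArg List.length h
      simp [hcard]
    | succ k ih =>
      rw [map_take_succ_eq_zipWith hk hR hrot, map_take_succ_eq_zipWith hk hR' hrot', h,
        ih (Nat.le_of_succ_le hk)]
  have htake_n : ∀ {S : Multiset (List α)}, (∀ r ∈ S, r.length = n) → S.map (·.take n) = S :=
    fun hS => (Multiset.map_congr rfl fun r hr => List.take_of_length_le (hS r hr).le).trans
      (Multiset.map_id' _)
  rw [← htake_n hR, ← htake_n hR', hprefix n le_rfl]

theorem isRotated_of_bwt_eq {s s' : List α} (hlen : s.length = s'.length) (h : bwt s = bwt s') :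
    s' ~r s := by
  have hrot : rotations s = rotations s' :=
    eq_of_lastColumn_eq (n := s.length) (fun _ => length_of_mem_rotations)
      (fun _ hr => (length_of_mem_rotations hr).trans hlen.symm)
      (map_rotate_rotations s _) (hlen ▸ map_rotate_rotations s' _) h
  rcases eq_or_ne s [] with rfl | hs
  · rw [List.length_eq_zero_iff.mp hlen.symm]
  · have hmem : s ∈ rotations s' :=
      hrot ▸ mem_rotations_iff.mpr ⟨0, List.length_pos_iff.mpr hs, List.rotate_zero s⟩
    obtain ⟨i, -, hi⟩ := mem_rotations_iff.mp hmem
    exact ⟨i, hi⟩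

end LastColumn

/-- A word w of length n is in the image of the Burrows–Wheeler
transform iff the inverse Extended Burrows–Wheeler Transform of w is a multiset
consisting of d copies of a single aperiodic cycle (t) for some primitive word
t with d·|t| = n (i.e. iff EBWT of such a multiset equals w); and in that case
BWT⁻¹(w) = t^d up to rotation (any s with BWT(s) = w is a rotation of t^d). -/
theorem bwt_image_iff_ebwt_inv_single_cycle (α : Type*) [LinearOrder α] [Inhabited α]
    (w : List α) :
    ((∃ s : List α, s.length = w.length ∧ bwt s = w) ↔
      (∃ (t : List α) (d : ℕ), Primitive t ∧ d * t.length = w.length ∧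
        ebwt (Multiset.replicate d t) = w))
    ∧ ∀ (t : List α) (d : ℕ), Primitive t → d * t.length = w.length →
        ebwt (Multiset.replicate d t) = w →
        ∀ s : List α, s.length = w.length → bwt s = w →
          ∃ j : ℕ, s = ((List.replicate d t).flatten).rotate j := by
  refine ⟨⟨?_, ?_⟩, ?_⟩
  · rintro ⟨s, hlen, rfl⟩
    rcases eq_or_ne s [] with rfl | hs
    · exact ⟨[default], 0, primitive_singleton _, by simpa using hlen, by simp [bwt, ebwt]⟩
    · obtain ⟨t, d, ht, rfl⟩ := exists_primitive_wordPow_eq hs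
      exact ⟨t, d, ht, (length_wordPow t d).symm.trans hlen, (bwt_wordPow t d).symm⟩
  · rintro ⟨t, d, -, hlen, hw⟩
    exact ⟨wordPow t d, by rw [length_wordPow, hlen], by rw [bwt_wordPow, hw]⟩
  · intro t d _ hlen hw s hs hbwt
    obtain ⟨j, hj⟩ := isRotated_of_bwt_eq (s' := wordPow t d) (by rw [hs, length_wordPow, hlen])
      (by rw [hbwt, bwt_wordPow, hw])
    exact ⟨j, hj.symm⟩
end
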